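/- arXiv:2404.02753 — 3 statements merged into one kernel-verified Lean document; each statement's English description precedes it below -/
import Mathlib

section
/- The group generated by the involutions π_{t,a} (for 1 ≤ t < g, a > 0) acts transitively on the set of standard Young tableaux of any skew Young diagram σ with g boxes. -/
open Finset
open scoped Classical

/-- A standard Young tableau of a (skew) diagram given by its set of `cells`
(pairs (row, column)) with `g` boxes: a filling by `1,…,g` (and `0` outside),
bijective onto `{1,…,g}`, strictly increasing along rows and columns. -/
def IsSYT (cells : Finset (ℕ × ℕ)) (g : ℕ) (T : ℕ × ℕ → ℕ) : Prop :=
  (∀ c, c ∉ cells → T c = 0) ∧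
  Set.BijOn T (cells : Set (ℕ × ℕ)) (Set.Icc 1 g) ∧
  (∀ i j j', (i, j) ∈ cells → (i, j') ∈ cells → j < j' → T (i, j) < T (i, j')) ∧
  (∀ i i' j, (i, j) ∈ cells → (i', j) ∈ cells → i < i' → T (i, j) < T (i', j))

/-- Exchange the entries `t` and `t+1` in a filling. -/
def swapVals (t : ℕ) (T : ℕ × ℕ → ℕ) : ℕ × ℕ → ℕ := fun c => Equiv.swap t (t + 1) (T c)

/-- The entries `t` and `t+1` lie in different rows and different columns,
at distance `a` (sum of horizontal and vertical distances). -/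
def ShouldSwap (cells : Finset (ℕ × ℕ)) (t a : ℕ) (T : ℕ × ℕ → ℕ) : Prop :=
  ∃ c ∈ cells, ∃ c' ∈ cells, T c = t ∧ T c' = t + 1 ∧ c.1 ≠ c'.1 ∧ c.2 ≠ c'.2 ∧
    Nat.dist c.1 c'.1 + Nat.dist c.2 c'.2 = a

/-- The involution `π_{t,a}`. -/
noncomputable def piAct (cells : Finset (ℕ × ℕ)) (t a : ℕ) (T : ℕ × ℕ → ℕ) : ℕ × ℕ → ℕ :=
  if ShouldSwap cells t a T then swapVals t T else T

/-- Column reading order on boxes: left to right, top to bottom within a column. -/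
def colLt (c c' : ℕ × ℕ) : Prop := c.2 < c'.2 ∨ (c.2 = c'.2 ∧ c.1 < c'.1)

/-- Row reading order on boxes: top to bottom, left to right within a row. -/
def rowLt (c c' : ℕ × ℕ) : Prop := c.1 < c'.1 ∨ (c.1 = c'.1 ∧ c.2 < c'.2)

/-- Column-wise lexicographic order on tableaux: at the first box (in column
reading order) where they differ, `T` has the smaller entry. -/
def lexLt (cells : Finset (ℕ × ℕ)) (T T' : ℕ × ℕ → ℕ) : Prop :=
  ∃ c ∈ cells, T c < T' c ∧ ∀ c' ∈ cells, colLt c' c → T c' = T' c'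

/-- The tableau filling `1,…,g` column by column (top to bottom in each column). -/
noncomputable def colMin (cells : Finset (ℕ × ℕ)) : ℕ × ℕ → ℕ :=
  fun c => if c ∈ cells then 1 + (cells.filter (fun c' => colLt c' c)).card else 0

/-- The tableau filling `1,…,g` row by row (left to right in each row). -/
noncomputable def rowMax (cells : Finset (ℕ × ℕ)) : ℕ × ℕ → ℕ :=
  fun c => if c ∈ cells then 1 + (cells.filter (fun c' => rowLt c' c)).card else 0

/-- Apply a composition of generators `π_{t,a}` given by a list of pairs `(t,a)`. -/
noncomputable def applyList (cells : Finset (ℕ × ℕ)) (l : List (ℕ × ℕ))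
    (T : ℕ × ℕ → ℕ) : ℕ × ℕ → ℕ :=
  l.foldl (fun U p => piAct cells p.1 p.2 U) T

/-!
Each generator is an involution preserving standard tableaux, so it suffices to carry every
tableau to the column reading tableau `colMin`. A tableau `T ≠ colMin` has a column descent:
boxes `c` before `d` in column reading order with `T c = T d + 1` (without one, entries would
increase along the reading order). Two such boxes share neither a row nor a column, so the
generator `π_{T d, a}`, with `a` their distance, exchanges the two entries; this strictly lowers
the weight `∑ T c * #{boxes after c}`.
-/

lemma colLt_trans {a b c : ℕ × ℕ} (hab : colLt a b) (hbc : colLt b c) : colLt a c := by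
  unfold colLt at *; omega

lemma colLt_irrefl (a : ℕ × ℕ) : ¬ colLt a a := by
  unfold colLt; omega

lemma colLt_or_colLt_of_ne {a b : ℕ × ℕ} (h : a ≠ b) : colLt a b ∨ colLt b a := by
  rw [Ne, Prod.ext_iff] at h
  unfold colLt; omega

lemma card_filter_colLt_lt {s : Finset (ℕ × ℕ)} {a b : ℕ × ℕ} (hb : b ∈ s) (hab : colLt a b) :
    #{c ∈ s | colLt b c} < #{c ∈ s | colLt a c} := by
  refine card_lt_card ⟨fun c hc => ?_, fun hsub => ?_⟩
  · simp only [mem_filter] at hc ⊢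
    exact ⟨hc.1, colLt_trans hab hc.2⟩
  · exact colLt_irrefl b (mem_filter.mp (hsub (mem_filter.mpr ⟨hb, hab⟩))).2

lemma swap_succ_lt_swap_succ {t x y : ℕ} (hxy : x < y) (h : ¬(x = t ∧ y = t + 1)) :
    Equiv.swap t (t + 1) x < Equiv.swap t (t + 1) y := by
  simp only [Equiv.swap_apply_def]
  split_ifs <;> omega

lemma bijOn_swap_Icc {t g : ℕ} (ht : 1 ≤ t) (htg : t + 1 ≤ g) :
    Set.BijOn (Equiv.swap t (t + 1)) (Set.Icc 1 g) (Set.Icc 1 g) :=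
  (Equiv.swap t (t + 1)).bijOn fun x => by
    simp only [Equiv.swap_apply_def, Set.mem_Icc]
    split_ifs <;> omega

lemma sum_swapVals_mul_add (s : Finset (ℕ × ℕ)) (w T : ℕ × ℕ → ℕ) (hinj : Set.InjOn T s)
    {t : ℕ} {x y : ℕ × ℕ} (hx : x ∈ s) (hy : y ∈ s) (hTx : T x = t) (hTy : T y = t + 1) :
    ∑ c ∈ s, swapVals t T c * w c + w y = ∑ c ∈ s, T c * w c + w x := by
  have hvalue : ∀ c ∈ s,
      swapVals t T c + (if c = y then 1 else 0) = T c + (if c = x then 1 else 0) := by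
    intro c hc
    by_cases hcx : c = x
    · subst hcx
      have : c ≠ y := fun h => by subst h; omega
      simp [swapVals, hTx, this]
    by_cases hcy : c = y
    · subst hcy
      simp [swapVals, hTy, hcx]
    have hct : T c ≠ t := fun h => hcx (hinj hc hx (h.trans hTx.symm))
    have hct' : T c ≠ t + 1 := fun h => hcy (hinj hc hy (h.trans hTy.symm))
    simp [swapVals, Equiv.swap_apply_of_ne_of_ne hct hct', hcx, hcy]
  have hsum := sum_congr rfl fun c hc => congrArg (· * w c) (hvalue c hc)
  simpa only [add_mul, sum_add_distrib, ite_mul, one_mul, zero_mul, sum_ite_eq', hx, hy,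
    if_true] using hsum

lemma piAct_piAct (cells : Finset (ℕ × ℕ)) (t a : ℕ) (T : ℕ × ℕ → ℕ) :
    piAct cells t a (piAct cells t a T) = T := by
  by_cases h : ShouldSwap cells t a T
  · have h' : ShouldSwap cells t a (swapVals t T) := by
      obtain ⟨c, hc, c', hc', hTc, hTc', hrow, hcol, hdist⟩ := h
      refine ⟨c', hc', c, hc, ?_, ?_, hrow.symm, hcol.symm, ?_⟩
      · simp [swapVals, hTc']
      · simp [swapVals, hTc]
      · rwa [Nat.dist_comm c'.1, Nat.dist_comm c'.2]
    funext c
    simp [piAct, h, h', swapVals]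
  · simp [piAct, h]

lemma applyList_append (cells : Finset (ℕ × ℕ)) (l l' : List (ℕ × ℕ)) (T : ℕ × ℕ → ℕ) :
    applyList cells (l ++ l') T = applyList cells l' (applyList cells l T) :=
  List.foldl_append

lemma applyList_reverse_applyList (cells : Finset (ℕ × ℕ)) (l : List (ℕ × ℕ))
    (T : ℕ × ℕ → ℕ) : applyList cells l.reverse (applyList cells l T) = T := by
  induction l generalizing T with
  | nil => rfl
  | cons p l ih =>
    rw [List.reverse_cons, applyList_append]
    exact (congrArg (piAct cells p.1 p.2) (ih _)).trans (piAct_piAct cells p.1 p.2 T)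

noncomputable def colWeight (cells : Finset (ℕ × ℕ)) (T : ℕ × ℕ → ℕ) : ℕ :=
  ∑ c ∈ cells, T c * #{c' ∈ cells | colLt c c'}

namespace IsSYT

variable {cells : Finset (ℕ × ℕ)} {g : ℕ} {T : ℕ × ℕ → ℕ}

lemma mem_Icc (hT : IsSYT cells g T) {c : ℕ × ℕ} (hc : c ∈ cells) : T c ∈ Set.Icc 1 g :=
  hT.2.1.mapsTo hc

lemma injOn (hT : IsSYT cells g T) : Set.InjOn T cells :=
  hT.2.1.injOn

lemma lt_of_row_or_col (hT : IsSYT cells g T) {c d : ℕ × ℕ} (hc : c ∈ cells) (hd : d ∈ cells)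
    (hcd : colLt c d) (hline : c.1 = d.1 ∨ c.2 = d.2) : T c < T d := by
  obtain ⟨-, -, hrow, hcol⟩ := hT
  obtain ⟨i, j⟩ := c
  obtain ⟨i', j'⟩ := d
  unfold colLt at hcd
  dsimp only at hcd hline
  rcases hline with rfl | rfl
  · exact hrow i j j' hc hd (by omega)
  · exact hcol i i' j hc hd (by omega)

lemma swapVals (hT : IsSYT cells g T) {c c' : ℕ × ℕ} (hc : c ∈ cells) (hc' : c' ∈ cells)
    {t : ℕ} (hTc : T c = t) (hTc' : T c' = t + 1) (hrow : c.1 ≠ c'.1) (hcol : c.2 ≠ c'.2) :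
    IsSYT cells g (swapVals t T) := by
  have ht : 1 ≤ t := hTc ▸ (hT.mem_Icc hc).1
  have htg : t + 1 ≤ g := hTc' ▸ (hT.mem_Icc hc').2
  have hmono : ∀ a ∈ cells, ∀ b ∈ cells, T a < T b →
      Equiv.swap t (t + 1) (T a) < Equiv.swap t (t + 1) (T b) ∨ (a = c ∧ b = c') :=
    fun a ha b hb hab => by
      by_cases h : T a = t ∧ T b = t + 1
      · exact .inr ⟨hT.injOn ha hc (h.1.trans hTc.symm), hT.injOn hb hc' (h.2.trans hTc'.symm)⟩
      · exact .inl (swap_succ_lt_swap_succ hab h)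
  obtain ⟨hzero, hbij, hrowT, hcolT⟩ := hT
  refine ⟨fun x hx => ?_, (bijOn_swap_Icc ht htg).comp hbij, fun i j j' hj hj' hjj => ?_,
    fun i i' j hi hi' hii => ?_⟩
  · simp only [_root_.swapVals, hzero x hx]
    exact Equiv.swap_apply_of_ne_of_ne (by omega) (by omega)
  · refine (hmono _ hj _ hj' (hrowT i j j' hj hj' hjj)).resolve_right ?_
    rintro ⟨rfl, rfl⟩
    exact hrow rfl
  · refine (hmono _ hi _ hi' (hcolT i i' j hi hi' hii)).resolve_right ?_
    rintro ⟨rfl, rfl⟩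
    exact hcol rfl

lemma piAct (hT : IsSYT cells g T) (t a : ℕ) : IsSYT cells g (piAct cells t a T) := by
  unfold _root_.piAct
  split_ifs with h
  · obtain ⟨c, hc, c', hc', hTc, hTc', hrow, hcol, -⟩ := h
    exact hT.swapVals hc hc' hTc hTc' hrow hcol
  · exact hT

lemma colLt_of_lt (hT : IsSYT cells g T)
    (hdesc : ∀ c ∈ cells, ∀ d ∈ cells, colLt c d → T d + 1 ≠ T c)
    {c d : ℕ × ℕ} (hc : c ∈ cells) (hd : d ∈ cells) (hlt : T d < T c) : colLt d c := by
  have hsucc : ∀ c ∈ cells, ∀ d ∈ cells, T d + 1 = T c → colLt d c := fun c hc d hd h =>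
    (colLt_or_colLt_of_ne fun hcd => by subst hcd; omega).resolve_left (hdesc c hc d hd · h)
  obtain ⟨n, hn⟩ : ∃ n, T c = T d + n + 1 := ⟨T c - T d - 1, by omega⟩
  induction n generalizing c with
  | zero => exact hsucc c hc d hd hn.symm
  | succ n ih =>
    have hcg := (hT.mem_Icc hc).2
    obtain ⟨e, he, hTe⟩ := hT.2.1.surjOn (show T c - 1 ∈ Set.Icc 1 g from ⟨by omega, by omega⟩)
    exact colLt_trans (ih he (by omega) (by omega)) (hsucc c hc e he (by omega))

lemma card_filter_lt (hT : IsSYT cells g T) {c : ℕ × ℕ} (hc : c ∈ cells) :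
    #{c' ∈ cells | T c' < T c} = T c - 1 := by
  have himage : image T {c' ∈ cells | T c' < T c} = Ico 1 (T c) := by
    ext v
    simp only [mem_image, mem_filter, mem_Ico]
    constructor
    · rintro ⟨c', ⟨hc', hlt⟩, rfl⟩
      exact ⟨(hT.mem_Icc hc').1, hlt⟩
    · rintro ⟨hv, hlt⟩
      have hcg := (hT.mem_Icc hc).2
      obtain ⟨c', hc', rfl⟩ := hT.2.1.surjOn (show v ∈ Set.Icc 1 g from ⟨hv, by omega⟩)
      exact ⟨c', ⟨hc', hlt⟩, rfl⟩
  rw [← Nat.card_Ico, ← himage, card_image_of_injOn (hT.injOn.mono fun c' hc' => ?_)]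
  exact (mem_filter.mp hc').1

lemma eq_colMin (hT : IsSYT cells g T)
    (hdesc : ∀ c ∈ cells, ∀ d ∈ cells, colLt c d → T d + 1 ≠ T c) : T = colMin cells := by
  funext c
  by_cases hc : c ∈ cells
  · have hfilter : {c' ∈ cells | colLt c' c} = {c' ∈ cells | T c' < T c} := by
      refine filter_congr fun c' hc' => ⟨fun hlt => ?_, hT.colLt_of_lt hdesc hc hc'⟩
      by_contra hge
      have hne : c' ≠ c := fun h => colLt_irrefl c (h ▸ hlt)
      have hgt : T c < T c' := lt_of_le_of_ne (not_lt.mp hge) (hne ∘ hT.injOn hc' hc ∘ Eq.symm)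
      exact colLt_irrefl c (colLt_trans (hT.colLt_of_lt hdesc hc' hc hgt) hlt)
    have hc1 := (hT.mem_Icc hc).1
    simp only [colMin, if_pos hc, hfilter, hT.card_filter_lt hc]
    omega
  · simp [colMin, hc, hT.1 c hc]

lemma exists_colDescent (hT : IsSYT cells g T) (hne : T ≠ colMin cells) :
    ∃ c ∈ cells, ∃ d ∈ cells, colLt c d ∧ T d + 1 = T c := by
  by_contra! hdesc
  exact hne (hT.eq_colMin hdesc)

lemma exists_piAct_colWeight_lt (hT : IsSYT cells g T) (hne : T ≠ colMin cells) :
    ∃ t a, 1 ≤ t ∧ t < g ∧ 0 < a ∧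
      colWeight cells (_root_.piAct cells t a T) < colWeight cells T := by
  obtain ⟨c, hc, d, hd, hcd, hdc⟩ := hT.exists_colDescent hne
  have hrow : d.1 ≠ c.1 := fun h => by have := hT.lt_of_row_or_col hc hd hcd (.inl h.symm); omega
  have hcol : d.2 ≠ c.2 := fun h => by have := hT.lt_of_row_or_col hc hd hcd (.inr h.symm); omega
  have hswap : ShouldSwap cells (T d) (Nat.dist d.1 c.1 + Nat.dist d.2 c.2) T :=
    ⟨d, hd, c, hc, rfl, hdc.symm, hrow, hcol, rfl⟩
  have hcg := (hT.mem_Icc hc).2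
  refine ⟨T d, Nat.dist d.1 c.1 + Nat.dist d.2 c.2, (hT.mem_Icc hd).1, by omega, by have := Nat.dist_pos_of_ne hcol; omega, ?_⟩
  have hsum := sum_swapVals_mul_add cells (fun c => #{c' ∈ cells | colLt c c'}) T hT.injOn
    hd hc rfl hdc.symm
  have hweight := card_filter_colLt_lt hd hcd
  simp only [colWeight, _root_.piAct, if_pos hswap]
  omega

lemma exists_applyList_eq_colMin (hT : IsSYT cells g T) :
    ∃ l : List (ℕ × ℕ), (∀ p ∈ l, 1 ≤ p.1 ∧ p.1 < g ∧ 0 < p.2) ∧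
      applyList cells l T = colMin cells := by
  induction hw : colWeight cells T using Nat.strong_induction_on generalizing T with
  | _ w ih =>
  by_cases hne : T = colMin cells
  · exact ⟨[], by simp, hne⟩
  obtain ⟨t, a, ht, htg, ha, hlt⟩ := hT.exists_piAct_colWeight_lt hne
  obtain ⟨l, hl, hTl⟩ := ih _ (hw ▸ hlt) (hT.piAct t a) rfl
  exact ⟨(t, a) :: l, by simpa [ht, htg, ha] using hl, hTl⟩

theorem exists_applyList_eq (hT : IsSYT cells g T) {T' : ℕ × ℕ → ℕ} (hT' : IsSYT cells g T') :
    ∃ l : List (ℕ × ℕ), (∀ p ∈ l, 1 ≤ p.1 ∧ p.1 < g ∧ 0 < p.2) ∧ applyList cells l T = T' := by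
  obtain ⟨l, hl, hTl⟩ := hT.exists_applyList_eq_colMin
  obtain ⟨l', hl', hTl'⟩ := hT'.exists_applyList_eq_colMin
  refine ⟨l ++ l'.reverse, fun p hp => ?_, ?_⟩
  · rcases List.mem_append.mp hp with hp | hp
    exacts [hl p hp, hl' p (List.mem_reverse.mp hp)]
  · rw [applyList_append, hTl, ← hTl', applyList_reverse_applyList]

end IsSYT

theorem stmt_6_general (lam mu : YoungDiagram) (g : ℕ)
    (T T' : ℕ × ℕ → ℕ) (hT : IsSYT (lam.cells \ mu.cells) g T)
    (hT' : IsSYT (lam.cells \ mu.cells) g T') :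
    ∃ l : List (ℕ × ℕ), (∀ p ∈ l, 1 ≤ p.1 ∧ p.1 < g ∧ 0 < p.2) ∧
      applyList (lam.cells \ mu.cells) l T = T' :=
  hT.exists_applyList_eq hT'

/-- The group generated by the involutions `π_{t,a}` (for `1 ≤ t < g`, `a > 0`) acts
transitively on the set of standard Young tableaux of any skew diagram `σ = λ \ μ`
with `g` boxes: any tableau can be carried to any other by a composition of the
generators. -/
theorem stmt_6 (lam mu : YoungDiagram) (hmu : mu ≤ lam) (g : ℕ)
    (hg : (lam.cells \ mu.cells).card = g)
    (T T' : ℕ × ℕ → ℕ) (hT : IsSYT (lam.cells \ mu.cells) g T)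
    (hT' : IsSYT (lam.cells \ mu.cells) g T') :
    ∃ l : List (ℕ × ℕ), (∀ p ∈ l, 1 ≤ p.1 ∧ p.1 < g ∧ 0 < p.2) ∧
      applyList (lam.cells \ mu.cells) l T = T' :=
  stmt_6_general lam mu g T T' hT hT'
end

section
/- The Catalan number C_n is odd if and only if n = 2^i − 1 for some integer i ≥ 0. -/
/-!
Modulo 2, the terms `C_i C_j` and `C_j C_i` of `C_{n+1} = ∑_{i+j=n} C_i C_j` cancel, leaving only
`C_m² ≡ C_m` when `n = 2m`. So `C_{2m+2}` is even and `C_{2m+1} ≡ C_m`, and `C_n` is odd exactly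
when repeatedly passing from `2m+1` to `m` reaches `0`, i.e. when `n = 2^i - 1`.
-/

open Finset

section CharTwo

variable {α R : Type*} [CommRing R] [CharP R 2]

theorem sum_mul_eq_zero_of_swap_mem_of_fst_ne_snd (f : α → R) {s : Finset (α × α)}
    (hswap : ∀ p ∈ s, p.swap ∈ s) (hdiag : ∀ p ∈ s, p.1 ≠ p.2) :
    ∑ p ∈ s, f p.1 * f p.2 = 0 :=
  sum_involution (fun p _ => p.swap)
    (fun p _ => by simpa only [Prod.fst_swap, Prod.snd_swap, mul_comm (f p.2)]
      using CharTwo.add_self_eq_zero (f p.1 * f p.2))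
    (fun p hp _ hfix => hdiag p hp (congrArg Prod.snd hfix))
    hswap (fun p _ => p.swap_swap)

theorem sum_antidiagonal_mul_eq_zero_of_odd (f : ℕ → R) {n : ℕ} (hn : Odd n) :
    ∑ p ∈ antidiagonal n, f p.1 * f p.2 = 0 := by
  refine sum_mul_eq_zero_of_swap_mem_of_fst_ne_snd f (fun p hp => ?_) (fun p hp hp' => ?_)
  · simpa [add_comm] using hp
  · rw [HasAntidiagonal.mem_antidiagonal, hp'] at hp
    exact Nat.not_even_iff_odd.2 hn ⟨p.2, hp.symm⟩

theorem sum_antidiagonal_two_mul_mul (f : ℕ → R) (m : ℕ) :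
    ∑ p ∈ antidiagonal (2 * m), f p.1 * f p.2 = f m ^ 2 := by
  have hmid : (m, m) ∈ antidiagonal (2 * m) := by simp [two_mul]
  rw [← add_sum_erase _ _ hmid, sq, add_eq_left]
  refine sum_mul_eq_zero_of_swap_mem_of_fst_ne_snd f (fun p hp => ?_) (fun p hp hp' => ?_)
  · simp only [mem_erase, HasAntidiagonal.mem_antidiagonal, ne_eq, Prod.ext_iff, Prod.fst_swap,
      Prod.snd_swap] at hp ⊢
    omega
  · simp only [mem_erase, HasAntidiagonal.mem_antidiagonal, ne_eq, Prod.ext_iff] at hp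
    omega

end CharTwo

theorem even_catalan_two_mul_add_two (m : ℕ) : Even (catalan (2 * m + 2)) := by
  rw [← ZMod.natCast_eq_zero_iff_even, catalan_succ']
  push_cast
  exact sum_antidiagonal_mul_eq_zero_of_odd (fun k => (catalan k : ZMod 2)) (odd_two_mul_add_one m)

theorem odd_catalan_two_mul_add_one_iff (m : ℕ) :
    Odd (catalan (2 * m + 1)) ↔ Odd (catalan m) := by
  rw [← ZMod.natCast_eq_one_iff_odd, ← ZMod.natCast_eq_one_iff_odd, catalan_succ']
  push_cast
  rw [sum_antidiagonal_two_mul_mul (fun k => (catalan k : ZMod 2)), ZMod.pow_card]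

theorem exists_two_mul_add_one_eq_mersenne_iff (m : ℕ) :
    (∃ i, 2 * m + 1 = mersenne i) ↔ ∃ i, m = mersenne i := by
  constructor
  · rintro ⟨_ | i, hi⟩
    · simp at hi
    · exact ⟨i, by rw [mersenne_succ] at hi; omega⟩
  · rintro ⟨i, rfl⟩
    exact ⟨i + 1, (mersenne_succ i).symm⟩

theorem two_mul_add_two_ne_mersenne (m i : ℕ) : 2 * m + 2 ≠ mersenne i := by
  rcases eq_or_ne i 0 with rfl | hi
  · simp
  · intro h
    exact Nat.not_even_iff_odd.2 (mersenne_odd.2 hi) (h ▸ ⟨m + 1, by ring⟩)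

/-- The Catalan number `C_n` is odd if and only if `n = 2^i − 1` for some `i ≥ 0`. -/
theorem stmt_12 (n : ℕ) : Odd (catalan n) ↔ ∃ i : ℕ, n = 2 ^ i - 1 := by
  change Odd (catalan n) ↔ ∃ i, n = mersenne i
  induction n using Nat.strong_induction_on with
  | _ n ih =>
    obtain ⟨m, rfl | rfl⟩ := Nat.even_or_odd' n
    · rcases m with _ | m
      · exact ⟨fun _ => ⟨0, rfl⟩, fun _ => by simp⟩
      · refine iff_of_false (Nat.not_odd_iff_even.2 (even_catalan_two_mul_add_two m)) ?_
        rintro ⟨i, hi⟩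
        exact two_mul_add_two_ne_mersenne m i hi
    · rw [odd_catalan_two_mul_add_one_iff, ih m (by omega),
        exists_two_mul_add_one_eq_mersenne_iff]
end

section
/- Let α, β be ramification sequences with ρ(g,r,d,α,β) = 0, and suppose additionally r ≥ 2 and α_r + β_r + g − d + r > r + 1. Then the number N(g,r,d,α,β) of standard Young tableaux of the skew diagram σ(g,r,d,α,β) satisfies N(g,r,d,α,β) ≥ 231. -/
open Finset
open scoped Classical

/-- Cells of the skew diagram `σ(g,r,d,α,β)`: row `i` (for `0 ≤ i ≤ r`, top to
bottom) occupies the columns `[α_0 − α_{r−i}, α_0 + (g−d+r) + β_i)`, so it has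
length `α_{r−i} + (g−d+r) + β_i`. -/
def sigmaCells (g r d : ℕ) (α β : ℕ → ℕ) : Finset (ℕ × ℕ) :=
  (Finset.range (r + 1)).biUnion fun i =>
    (Finset.Ico (α 0 - α (r - i)) (α 0 + (g + r - d) + β i)).image fun j => ((i, j) : ℕ × ℕ)

/-!
A standard tableau of an order-convex sub-diagram `D ⊆ C` extends to one of `C`: number the
cells of `C` lying below `D` first (in column reading order), then `D` as prescribed, then the
remaining cells. Since `r ≥ 2` and `α_r + β_r + g − d + r ≥ 4`, the diagram `σ(g,r,d,α,β)`
contains the `3 × 4` rectangle in rows `0, 1, 2` and columns `α_0 − α_r, …, α_0 − α_r + 3`, and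
this rectangle has `462 ≥ 231` standard tableaux, computed by the branching rule.
-/

abbrev SYT (cells : Finset (ℕ × ℕ)) (n : ℕ) : Type := {T : ℕ × ℕ → ℕ // IsSYT cells n T}

namespace IsSYT

variable {C : Finset (ℕ × ℕ)} {n : ℕ} {T : ℕ × ℕ → ℕ}

lemma eq_zero (h : IsSYT C n T) {c : ℕ × ℕ} (hc : c ∉ C) : T c = 0 := h.1 c hc

lemma one_le (h : IsSYT C n T) {c : ℕ × ℕ} (hc : c ∈ C) : 1 ≤ T c := (h.2.1.mapsTo hc).1

lemma le (h : IsSYT C n T) {c : ℕ × ℕ} (hc : c ∈ C) : T c ≤ n := (h.2.1.mapsTo hc).2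

end IsSYT

instance finite_SYT (C : Finset (ℕ × ℕ)) (n : ℕ) : Finite (SYT C n) := by
  refine Finite.of_injective
    (fun T : SYT C n => fun c : C => (⟨T.1 c, Nat.lt_succ_of_le (T.2.le c.2)⟩ : Fin (n + 1))) ?_
  intro T T' h
  ext c
  by_cases hc : c ∈ C
  · exact congrArg Fin.val (congrFun h ⟨c, hc⟩)
  · rw [T.2.eq_zero hc, T'.2.eq_zero hc]

lemma bijOn_Icc_of_injOn {α : Type*} {s : Finset α} {f : α → ℕ}
    (hmaps : Set.MapsTo f s (Set.Icc 1 s.card)) (hinj : Set.InjOn f s) :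
    Set.BijOn f s (Set.Icc 1 s.card) := by
  have himage : s.image f = Finset.Icc 1 s.card := by
    refine Finset.eq_of_subset_of_card_le (fun y hy => ?_) ?_
    · obtain ⟨c, hc, rfl⟩ := Finset.mem_image.mp hy
      simpa using hmaps hc
    · rw [Finset.card_image_of_injOn hinj, Nat.card_Icc]
      omega
  refine ⟨hmaps, hinj, fun y hy => ?_⟩
  rw [← Finset.coe_Icc, ← himage, Finset.coe_image] at hy
  exact hy

section ColumnReading

lemma colLt_iff {c c' : ℕ × ℕ} : colLt c c' ↔ toLex (c.2, c.1) < toLex (c'.2, c'.1) := by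
  simp [colLt, Prod.Lex.lt_iff]

lemma colMin_of_mem {C : Finset (ℕ × ℕ)} {c : ℕ × ℕ} (hc : c ∈ C) :
    colMin C c = 1 + (C.filter fun c' => colLt c' c).card := if_pos hc

lemma colMin_lt_colMin {C : Finset (ℕ × ℕ)} {c c' : ℕ × ℕ} (hc : c ∈ C) (hc' : c' ∈ C)
    (h : colLt c c') : colMin C c < colMin C c' := by
  rw [colMin_of_mem hc, colMin_of_mem hc', add_lt_add_iff_left]
  refine Finset.card_lt_card ((Finset.ssubset_iff_of_subset fun x hx => ?_).mpr ⟨c, ?_, ?_⟩)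
  · simp only [Finset.mem_filter, colLt_iff] at hx ⊢
    exact ⟨hx.1, hx.2.trans (colLt_iff.mp h)⟩
  · exact Finset.mem_filter.mpr ⟨hc, h⟩
  · simp [colLt_iff]

lemma isSYT_colMin (C : Finset (ℕ × ℕ)) : IsSYT C C.card (colMin C) := by
  refine ⟨fun c hc => if_neg hc, bijOn_Icc_of_injOn (fun c hc => ?_) (fun c hc c' hc' h => ?_),
    fun i j j' hc hc' hj => colMin_lt_colMin hc hc' (Or.inl hj),
    fun i i' j hc hc' hi => colMin_lt_colMin hc hc' (Or.inr ⟨rfl, hi⟩)⟩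
  · have hsub : (C.filter fun c' => colLt c' c) ⊆ C.erase c := fun x hx => by
      simp only [Finset.mem_filter, colLt_iff] at hx
      exact Finset.mem_erase.mpr ⟨fun hxc => by simp [hxc] at hx, hx.1⟩
    have := Finset.card_le_card hsub
    rw [Finset.card_erase_of_mem hc] at this
    have := Finset.card_pos.mpr ⟨c, hc⟩
    rw [colMin_of_mem hc]
    constructor <;> omega
  · by_contra hne
    have hkey : toLex (c.2, c.1) ≠ toLex (c'.2, c'.1) := fun h' => hne <| by
      simp only [toLex_inj, Prod.mk.injEq] at h'
      exact Prod.ext h'.2 h'.1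
    rcases hkey.lt_or_gt with hlt | hlt
    · exact (colMin_lt_colMin hc hc' (colLt_iff.mpr hlt)).ne h
    · exact (colMin_lt_colMin hc' hc (colLt_iff.mpr hlt)).ne' h

instance nonempty_SYT (C : Finset (ℕ × ℕ)) : Nonempty (SYT C C.card) :=
  ⟨⟨colMin C, isSYT_colMin C⟩⟩

end ColumnReading

section Gluing

variable {A B : Finset (ℕ × ℕ)} {m n : ℕ} {T T' : ℕ × ℕ → ℕ}

def glue (B : Finset (ℕ × ℕ)) (m : ℕ) (T T' : ℕ × ℕ → ℕ) : ℕ × ℕ → ℕ :=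
  fun c => if c ∈ B then m + T' c else T c

lemma disjoint_of_forall_not_le (hAB : ∀ a ∈ A, ∀ b ∈ B, ¬ b ≤ a) : Disjoint A B :=
  Finset.disjoint_left.mpr fun a ha hb => hAB a ha a hb le_rfl

lemma glue_of_mem_left (hAB : ∀ a ∈ A, ∀ b ∈ B, ¬ b ≤ a) {c : ℕ × ℕ} (hc : c ∈ A) :
    glue B m T T' c = T c :=
  if_neg (Finset.disjoint_left.mp (disjoint_of_forall_not_le hAB) hc)

lemma glue_of_mem_right {c : ℕ × ℕ} (hc : c ∈ B) : glue B m T T' c = m + T' c := if_pos hc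

lemma glue_lt_glue (hT : IsSYT A m T) (hT' : IsSYT B n T') (hAB : ∀ a ∈ A, ∀ b ∈ B, ¬ b ≤ a)
    {c c' : ℕ × ℕ} (hc : c ∈ A ∪ B) (hc' : c' ∈ A ∪ B) (hle : c ≤ c')
    (hA : c ∈ A → c' ∈ A → T c < T c') (hB : c ∈ B → c' ∈ B → T' c < T' c') :
    glue B m T T' c < glue B m T T' c' := by
  rcases Finset.mem_union.mp hc with hcA | hcB <;> rcases Finset.mem_union.mp hc' with hc'A | hc'B
  · rw [glue_of_mem_left hAB hcA, glue_of_mem_left hAB hc'A]; exact hA hcA hc'A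
  · rw [glue_of_mem_left hAB hcA, glue_of_mem_right hc'B]
    have := hT.le hcA; have := hT'.one_le hc'B; omega
  · exact absurd hle (hAB c' hc'A c hcB)
  · rw [glue_of_mem_right hcB, glue_of_mem_right hc'B]; exact Nat.add_lt_add_left (hB hcB hc'B) m

lemma isSYT_glue (hT : IsSYT A m T) (hT' : IsSYT B n T') (hAB : ∀ a ∈ A, ∀ b ∈ B, ¬ b ≤ a) :
    IsSYT (A ∪ B) (m + n) (glue B m T T') := by
  refine ⟨fun c hc => ?_, ⟨fun c hc => ?_, fun c hc c' hc' h => ?_, fun x hx => ?_⟩, ?_, ?_⟩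
  · rw [Finset.mem_union, not_or] at hc
    rw [glue, if_neg hc.2, hT.eq_zero hc.1]
  · rcases Finset.mem_union.mp hc with hcA | hcB
    · rw [glue_of_mem_left hAB hcA]
      have := hT.one_le hcA; have := hT.le hcA
      constructor <;> omega
    · rw [glue_of_mem_right hcB]
      have := hT'.one_le hcB; have := hT'.le hcB
      constructor <;> omega
  · rcases Finset.mem_union.mp hc with hcA | hcB <;>
      rcases Finset.mem_union.mp hc' with hc'A | hc'B
    · rw [glue_of_mem_left hAB hcA, glue_of_mem_left hAB hc'A] at h
      exact hT.2.1.injOn hcA hc'A h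
    · rw [glue_of_mem_left hAB hcA, glue_of_mem_right hc'B] at h
      have := hT.le hcA; have := hT'.one_le hc'B; omega
    · rw [glue_of_mem_right hcB, glue_of_mem_left hAB hc'A] at h
      have := hT.le hc'A; have := hT'.one_le hcB; omega
    · rw [glue_of_mem_right hcB, glue_of_mem_right hc'B] at h
      exact hT'.2.1.injOn hcB hc'B (Nat.add_left_cancel h)
  · obtain ⟨hx1, hx2⟩ := hx
    by_cases hxm : x ≤ m
    · obtain ⟨c, hcA, rfl⟩ := hT.2.1.surjOn ⟨hx1, hxm⟩
      exact ⟨c, Finset.mem_union_left B hcA, glue_of_mem_left hAB hcA⟩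
    · obtain ⟨c, hcB, hc⟩ := hT'.2.1.surjOn (show x - m ∈ Set.Icc 1 n by constructor <;> omega)
      exact ⟨c, Finset.mem_union_right A hcB, by rw [glue_of_mem_right hcB, hc]; omega⟩
  · intro i j j' hc hc' hj
    exact glue_lt_glue hT hT' hAB hc hc' (Prod.mk_le_mk.mpr ⟨le_rfl, hj.le⟩)
      (fun h h' => hT.2.2.1 i j j' h h' hj) (fun h h' => hT'.2.2.1 i j j' h h' hj)
  · intro i i' j hc hc' hi
    exact glue_lt_glue hT hT' hAB hc hc' (Prod.mk_le_mk.mpr ⟨hi.le, le_rfl⟩)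
      (fun h h' => hT.2.2.2 i i' j h h' hi) (fun h h' => hT'.2.2.2 i i' j h h' hi)

lemma glue_injective (hAB : ∀ a ∈ A, ∀ b ∈ B, ¬ b ≤ a) {S S' : ℕ × ℕ → ℕ}
    (hT : IsSYT A m T) (hS : IsSYT A m S) (hT' : IsSYT B n T') (hS' : IsSYT B n S')
    (h : glue B m T T' = glue B m S S') : T = S ∧ T' = S' := by
  have hdisj := Finset.disjoint_left.mp (disjoint_of_forall_not_le hAB)
  constructor <;> funext c <;> have hc := congrFun h c <;> by_cases hcB : c ∈ B
  · have hcA : c ∉ A := fun hcA => hdisj hcA hcB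
    rw [hT.eq_zero hcA, hS.eq_zero hcA]
  · simpa [glue, hcB] using hc
  · simpa [glue, hcB] using hc
  · rw [hT'.eq_zero hcB, hS'.eq_zero hcB]

lemma card_SYT_mul_card_SYT_le (hAB : ∀ a ∈ A, ∀ b ∈ B, ¬ b ≤ a) :
    Nat.card (SYT A m) * Nat.card (SYT B n) ≤ Nat.card (SYT (A ∪ B) (m + n)) := by
  rw [← Nat.card_prod]
  refine Nat.card_le_card_of_injective
    (fun P => ⟨glue B m P.1.1 P.2.1, isSYT_glue P.1.2 P.2.2 hAB⟩) fun P Q h => ?_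
  obtain ⟨h1, h2⟩ := glue_injective hAB P.1.2 Q.1.2 P.2.2 Q.2.2 (congrArg Subtype.val h)
  exact Prod.ext (Subtype.ext h1) (Subtype.ext h2)

lemma card_union_of_forall_not_le (hAB : ∀ a ∈ A, ∀ b ∈ B, ¬ b ≤ a) :
    (A ∪ B).card = A.card + B.card :=
  Finset.card_union_of_disjoint (disjoint_of_forall_not_le hAB)

lemma card_SYT_le_card_SYT_union_left (hAB : ∀ a ∈ A, ∀ b ∈ B, ¬ b ≤ a) :
    Nat.card (SYT A A.card) ≤ Nat.card (SYT (A ∪ B) (A ∪ B).card) := by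
  rw [card_union_of_forall_not_le hAB]
  exact (Nat.le_mul_of_pos_right _ Nat.card_pos).trans (card_SYT_mul_card_SYT_le hAB)

lemma card_SYT_le_card_SYT_union_right (hAB : ∀ a ∈ A, ∀ b ∈ B, ¬ b ≤ a) :
    Nat.card (SYT B B.card) ≤ Nat.card (SYT (A ∪ B) (A ∪ B).card) := by
  rw [card_union_of_forall_not_le hAB]
  exact (Nat.le_mul_of_pos_left _ Nat.card_pos).trans (card_SYT_mul_card_SYT_le hAB)

end Gluing

theorem card_SYT_le_of_ordConnected {C D : Finset (ℕ × ℕ)} (hDC : D ⊆ C)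
    (hD : ∀ x ∈ D, ∀ y ∈ C, ∀ z ∈ D, x ≤ y → y ≤ z → y ∈ D) :
    Nat.card (SYT D D.card) ≤ Nat.card (SYT C C.card) := by
  set L := C.filter fun y => y ∉ D ∧ ∃ z ∈ D, y ≤ z
  have hLD : ∀ a ∈ L, ∀ b ∈ D, ¬ b ≤ a := by
    intro a ha b hb hba
    obtain ⟨haC, haD, z, hz, haz⟩ := Finset.mem_filter.mp ha
    exact haD (hD b hb a haC z hz hba haz)
  have hLDU : ∀ a ∈ L ∪ D, ∀ b ∈ C \ (L ∪ D), ¬ b ≤ a := by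
    intro a ha b hb hba
    obtain ⟨hbC, hbLD⟩ := Finset.mem_sdiff.mp hb
    have hbL : b ∉ L := fun h => hbLD (Finset.mem_union_left D h)
    have hbD : b ∉ D := fun h => hbLD (Finset.mem_union_right L h)
    refine hbL (Finset.mem_filter.mpr ⟨hbC, hbD, ?_⟩)
    rcases Finset.mem_union.mp ha with haL | haD
    · obtain ⟨-, -, z, hz, haz⟩ := Finset.mem_filter.mp haL
      exact ⟨z, hz, hba.trans haz⟩
    · exact ⟨a, haD, hba⟩
  have hLDC : L ∪ D ⊆ C := Finset.union_subset (Finset.filter_subset _ C) hDC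
  calc Nat.card (SYT D D.card)
      ≤ Nat.card (SYT (L ∪ D) (L ∪ D).card) := card_SYT_le_card_SYT_union_right hLD
    _ ≤ Nat.card (SYT (L ∪ D ∪ C \ (L ∪ D)) (L ∪ D ∪ C \ (L ∪ D)).card) :=
        card_SYT_le_card_SYT_union_left hLDU
    _ = Nat.card (SYT C C.card) := by rw [Finset.union_sdiff_of_subset hLDC]

-- Branching rule: the largest entry of a tableau sits in a maximal cell.
theorem sum_card_SYT_erase_le {C K : Finset (ℕ × ℕ)} (hKC : K ⊆ C)
    (hK : ∀ c ∈ K, ∀ c' ∈ C, c ≤ c' → c' = c) (n : ℕ) :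
    ∑ c ∈ K, Nat.card (SYT (C.erase c) n) ≤ Nat.card (SYT C (n + 1)) := by
  have hmax : ∀ c ∈ K, ∀ a ∈ C.erase c, ∀ b ∈ ({c} : Finset (ℕ × ℕ)), ¬ b ≤ a := by
    intro c hc a ha b hb hba
    rw [Finset.mem_singleton.mp hb] at hba
    exact (Finset.mem_erase.mp ha).1 (hK c hc a (Finset.mem_erase.mp ha).2 hba)
  have hsingle : ∀ c : ℕ × ℕ, IsSYT {c} 1 (colMin {c}) := fun c => by
    simpa using isSYT_colMin {c}
  have hext : ∀ c : K, ∀ T : SYT (C.erase c) n, IsSYT C (n + 1) (glue {c.1} n T.1 (colMin {c.1})) :=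
    fun c T => by
      simpa [Finset.insert_erase (hKC c.2)] using
        isSYT_glue T.2 (hsingle c) (hmax c c.2)
  have htop : ∀ c : K, ∀ T : SYT (C.erase c) n, glue {c.1} n T.1 (colMin {c.1}) c = n + 1 :=
    fun c T => by
      rw [glue_of_mem_right (Finset.mem_singleton_self _)]
      have := (hsingle c).one_le (Finset.mem_singleton_self c.1)
      have := (hsingle c).le (Finset.mem_singleton_self c.1)
      omega
  rw [← Finset.sum_coe_sort K, ← Nat.card_sigma]
  refine Nat.card_le_card_of_injective (fun P => ⟨_, hext P.1 P.2⟩) ?_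
  rintro ⟨c, T⟩ ⟨c', T'⟩ h
  have h : glue {c.1} n T.1 (colMin {c.1}) = glue {c'.1} n T'.1 (colMin {c'.1}) :=
    congrArg Subtype.val h
  obtain rfl : c = c' := by
    by_contra hne
    have hcc' : c.1 ∈ C.erase c' := Finset.mem_erase.mpr ⟨Subtype.coe_ne_coe.mpr hne, hKC c.2⟩
    have h1 := congrFun h c
    rw [htop, glue, if_neg (by simpa using Subtype.coe_ne_coe.mpr hne)] at h1
    have := T'.2.le hcc'
    omega
  have := (glue_injective (hmax c c.2) T.2 T'.2 (hsingle c) (hsingle c) h).1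
  rw [Subtype.ext this]

section Rows

def rowCells (k : ℕ) (lo hi : ℕ → ℕ) : Finset (ℕ × ℕ) :=
  (Finset.range k).biUnion fun i => (Finset.Ico (lo i) (hi i)).image fun j => (i, j)

variable {k : ℕ} {lo hi : ℕ → ℕ}

lemma mem_rowCells {c : ℕ × ℕ} : c ∈ rowCells k lo hi ↔ c.1 < k ∧ lo c.1 ≤ c.2 ∧ c.2 < hi c.1 := by
  obtain ⟨i, j⟩ := c
  simp only [rowCells, Finset.mem_biUnion, Finset.mem_range, Finset.mem_image, Finset.mem_Ico,
    Prod.mk.injEq]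
  constructor
  · rintro ⟨i, hi, j, hj, rfl, rfl⟩; exact ⟨hi, hj⟩
  · rintro ⟨hi, hj⟩; exact ⟨i, hi, j, hj, rfl, rfl⟩

lemma card_rowCells : (rowCells k lo hi).card = ∑ i ∈ Finset.range k, (hi i - lo i) := by
  rw [rowCells, Finset.card_biUnion]
  · simp [Finset.card_image_of_injective _ (Prod.mk_right_injective _)]
  · intro i _ i' _ hii'
    simp only [Function.onFun, Finset.disjoint_left, Finset.mem_image]
    rintro _ ⟨j, -, rfl⟩ ⟨j', -, h⟩
    exact hii' (Prod.mk.inj h).1.symm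

def rowShape (k s : ℕ) (len : ℕ → ℕ) : Finset (ℕ × ℕ) :=
  rowCells k (fun _ => s) fun i => s + len i

variable {k s : ℕ} {len : ℕ → ℕ}

lemma mem_rowShape {c : ℕ × ℕ} : c ∈ rowShape k s len ↔ c.1 < k ∧ s ≤ c.2 ∧ c.2 < s + len c.1 :=
  mem_rowCells

def IsCornerRow (k : ℕ) (len : ℕ → ℕ) (i : ℕ) : Prop :=
  0 < len i ∧ ∀ i' < k, i < i' → len i' < len i

instance (k : ℕ) (len : ℕ → ℕ) : DecidablePred (IsCornerRow k len) :=
  fun i => inferInstanceAs (Decidable (0 < len i ∧ ∀ i' < k, i < i' → len i' < len i))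

lemma rowShape_update_eq_erase {i : ℕ} (hi : i < k) (hpos : 0 < len i) :
    rowShape k s (Function.update len i (len i - 1)) = (rowShape k s len).erase (i, s + len i - 1) := by
  ext ⟨i', j⟩
  simp only [Finset.mem_erase, mem_rowShape, ne_eq, Prod.mk.injEq]
  by_cases hi' : i' = i
  · subst hi'; simp only [Function.update_self, true_and]; omega
  · simp [hi']

lemma corner_mem_rowShape {i : ℕ} (hi : i < k) (hpos : 0 < len i) :
    (i, s + len i - 1) ∈ rowShape k s len :=
  mem_rowShape.mpr ⟨hi, by omega, by dsimp only; omega⟩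

lemma corner_maximal {i : ℕ} (hi : IsCornerRow k len i) :
    ∀ c' ∈ rowShape k s len, (i, s + len i - 1) ≤ c' → c' = (i, s + len i - 1) := by
  rintro ⟨i', j'⟩ hc' hle
  obtain ⟨hi'k, -, hj'⟩ := mem_rowShape.mp hc'
  obtain ⟨hii', hjj'⟩ := Prod.mk_le_mk.mp hle
  rcases hii'.lt_or_eq with hlt | rfl
  · have := hi.2 i' hi'k hlt
    simp only at hj'
    omega
  · simp only at hj'
    simp only [Prod.mk.injEq, true_and]
    omega

end Rows

-- For a partition shape this is exactly the branching-rule count of its standard tableaux.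
def sytCount (k : ℕ) : ℕ → (ℕ → ℕ) → ℕ
  | 0, _ => 1
  | n + 1, len => ∑ i ∈ (Finset.range k).filter (IsCornerRow k len),
      sytCount k n (Function.update len i (len i - 1))

theorem sytCount_le_card_SYT (k s : ℕ) :
    ∀ n len, (rowShape k s len).card = n → sytCount k n len ≤ Nat.card (SYT (rowShape k s len) n)
  | 0, len, hcard => by
    have : Nonempty (SYT (rowShape k s len) 0) := hcard ▸ nonempty_SYT _
    exact Nat.card_pos
  | n + 1, len, hcard => by
    set R := (Finset.range k).filter (IsCornerRow k len)
    have hR : ∀ i ∈ R, i < k ∧ IsCornerRow k len i := fun i hi => by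
      simpa using Finset.mem_filter.mp hi
    set corner : ℕ → ℕ × ℕ := fun i => (i, s + len i - 1)
    have hcorner_inj : Set.InjOn corner R := fun i _ i' _ h => (Prod.mk.injEq _ _ _ _ ▸ h).1
    calc sytCount k (n + 1) len
        = ∑ i ∈ R, sytCount k n (Function.update len i (len i - 1)) := rfl
      _ ≤ ∑ i ∈ R, Nat.card (SYT ((rowShape k s len).erase (corner i)) n) := by
          refine Finset.sum_le_sum fun i hi => ?_
          obtain ⟨hik, hi⟩ := hR i hi
          rw [← rowShape_update_eq_erase hik hi.1]
          refine sytCount_le_card_SYT k s n _ ?_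
          rw [rowShape_update_eq_erase hik hi.1, Finset.card_erase_of_mem
            (corner_mem_rowShape hik hi.1), hcard, Nat.add_sub_cancel]
      _ = ∑ c ∈ R.image corner, Nat.card (SYT ((rowShape k s len).erase c) n) :=
          (Finset.sum_image (f := fun c => Nat.card (SYT ((rowShape k s len).erase c) n))
            hcorner_inj).symm
      _ ≤ Nat.card (SYT (rowShape k s len) (n + 1)) := by
          refine sum_card_SYT_erase_le (fun c hc => ?_) (fun c hc => ?_) n
          all_goals
            obtain ⟨i, hi, rfl⟩ := Finset.mem_image.mp hc
            obtain ⟨hik, hi⟩ := hR i hi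
          · exact corner_mem_rowShape hik hi.1
          · exact corner_maximal hi

-- The hook length formula gives `12! / (6·5·4·3 · 5·4·3·2 · 4·3·2·1) = 462`.
theorem sytCount_three_four : sytCount 3 12 (fun _ => 4) = 462 := by decide +kernel

lemma ordConnected_rowShape_const {k s m : ℕ} :
    ∀ x ∈ rowShape k s (fun _ => m), ∀ y : ℕ × ℕ, ∀ z ∈ rowShape k s (fun _ => m),
      x ≤ y → y ≤ z → y ∈ rowShape k s (fun _ => m) := by
  intro x hx y z hz hxy hyz
  rw [mem_rowShape] at hx hz ⊢
  rw [Prod.le_def] at hxy hyz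
  omega

lemma card_rowShape_const (k s m : ℕ) : (rowShape k s fun _ => m).card = k * m := by
  simp [rowShape, card_rowCells]

section SigmaCells

variable {g r d : ℕ} {α β : ℕ → ℕ}

lemma sigmaCells_eq_rowCells :
    sigmaCells g r d α β = rowCells (r + 1) (fun i => α 0 - α (r - i)) fun i => α 0 + (g + r - d) + β i :=
  rfl

lemma mem_sigmaCells {c : ℕ × ℕ} :
    c ∈ sigmaCells g r d α β ↔
      c.1 ≤ r ∧ α 0 - α (r - c.1) ≤ c.2 ∧ c.2 < α 0 + (g + r - d) + β c.1 := by
  rw [sigmaCells_eq_rowCells, mem_rowCells, Nat.lt_succ_iff]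

lemma card_sigmaCells (hα : ∀ i ≤ r, α i ≤ α 0) :
    (sigmaCells g r d α β).card =
      (r + 1) * (g + r - d) + (∑ i ∈ Finset.range (r + 1), α i) + ∑ i ∈ Finset.range (r + 1), β i := by
  have hrow : ∀ i ∈ Finset.range (r + 1),
      α 0 + (g + r - d) + β i - (α 0 - α (r - i)) = α (r - i) + (g + r - d) + β i := fun i _ => by
    have := hα (r - i) (Nat.sub_le r i)
    omega
  have hreflect : ∑ i ∈ Finset.range (r + 1), α (r - i) = ∑ i ∈ Finset.range (r + 1), α i := by
    simpa using Finset.sum_range_reflect α (r + 1)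
  rw [sigmaCells_eq_rowCells, card_rowCells, Finset.sum_congr rfl hrow, Finset.sum_add_distrib,
    Finset.sum_add_distrib, hreflect, Finset.sum_const, Finset.card_range, smul_eq_mul]
  ring

end SigmaCells

theorem stmt_15_general (g r d : ℕ) (α β : ℕ → ℕ)
    (hα : ∀ i j, i ≤ j → j ≤ r → α j ≤ α i)
    (hβ : ∀ i j, i ≤ j → j ≤ r → β j ≤ β i)
    (hρ : g = (r + 1) * (g + r - d) + (∑ i ∈ Finset.range (r + 1), α i) +
      ∑ i ∈ Finset.range (r + 1), β i)
    (hr : 2 ≤ r) (hbig : r + 1 < α r + β r + (g + r - d)) :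
    231 ≤ Nat.card {T : ℕ × ℕ → ℕ // IsSYT (sigmaCells g r d α β) g T} := by
  set R := rowShape 3 (α 0 - α r) fun _ => 4
  have hRσ : R ⊆ sigmaCells g r d α β := fun c hc => by
    obtain ⟨hc1, hc2, hc3⟩ := mem_rowShape.mp hc
    have := hα 0 r (Nat.zero_le r) le_rfl
    have := hα (r - c.1) r (Nat.sub_le r c.1) le_rfl
    have := hβ c.1 r (by omega) le_rfl
    exact mem_sigmaCells.mpr ⟨by omega, by omega, by omega⟩
  have hRcard : R.card = 12 := card_rowShape_const 3 _ 4
  have hσcard : (sigmaCells g r d α β).card = g :=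
    (card_sigmaCells fun i hi => hα 0 i (Nat.zero_le i) hi).trans hρ.symm
  calc 231 ≤ sytCount 3 12 fun _ => 4 := by rw [sytCount_three_four]; norm_num
    _ ≤ Nat.card (SYT R R.card) := hRcard ▸ sytCount_le_card_SYT 3 _ 12 _ hRcard
    _ ≤ Nat.card (SYT (sigmaCells g r d α β) (sigmaCells g r d α β).card) :=
        card_SYT_le_of_ordConnected hRσ fun x hx y _ z hz => ordConnected_rowShape_const x hx y z hz
    _ = _ := by rw [hσcard]

/-- If `ρ(g,r,d,α,β) = 0`, `r ≥ 2` and `α_r + β_r + g − d + r > r + 1`, then the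
number `N(g,r,d,α,β)` of standard Young tableaux of `σ(g,r,d,α,β)` is at least
`231`. -/
theorem stmt_15 (g r d : ℕ) (α β : ℕ → ℕ)
    (hd : d ≤ g + r)
    (hα : ∀ i j, i ≤ j → j ≤ r → α j ≤ α i)
    (hβ : ∀ i j, i ≤ j → j ≤ r → β j ≤ β i)
    (hα0 : α 0 + r ≤ d) (hβ0 : β 0 + r ≤ d)
    (hρ : g = (r + 1) * (g + r - d) + (∑ i ∈ Finset.range (r + 1), α i) +
      ∑ i ∈ Finset.range (r + 1), β i)
    (hr : 2 ≤ r) (hbig : r + 1 < α r + β r + (g + r - d)) :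
    231 ≤ Nat.card {T : ℕ × ℕ → ℕ // IsSYT (sigmaCells g r d α β) g T} :=
  stmt_15_general g r d α β hα hβ hρ hr hbig
end
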